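/- arXiv:1506.03279 — 2 statements merged into one kernel-verified Lean document; each statement's English description precedes it below -/
import Mathlib

section
/- Let κ : [0,1] → ℝ be continuous. There exists N₀ ≥ 1 such that for every real N ≥ N₀ the boundary value problems w'' + (κ/N)w = 0 with boundary data w(0) = 0, w(1) = 1, respectively w(0) = 1, w(1) = 0, have unique solutions a_N and b_N on [0,1]. Moreover a_N + b_N → 1 uniformly on [0,1] as N → ∞, and for each t ∈ [0,1], N·(1 − a_N(t) − b_N(t)) → −∫₀¹ g(t,s)·κ(s) ds as N → ∞, where g(t,s) = min{s(1−t), t(1−s)} is the Green function of the unit interval. -/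
open Set MeasureTheory

/-- `u` is a (twice continuously differentiable) solution of `u'' + κ·u = 0` on the set `s`,
with first and second derivative functions `u'` and `u''`. -/
def SturmSol (κ u u' u'' : ℝ → ℝ) (s : Set ℝ) : Prop :=
  (∀ t ∈ s, HasDerivWithinAt u (u' t) s t) ∧
  (∀ t ∈ s, HasDerivWithinAt u' (u'' t) s t) ∧
  ContinuousOn u'' s ∧
  (∀ t ∈ s, u'' t + κ t * u t = 0)



open Set MeasureTheory intervalIntegral

/-- The Picard operator for the BVP. -/
noncomputable def Tcore (κ : ℝ → ℝ) (N α β : ℝ) (f : ℝ → ℝ) : ℝ → ℝ := fun t =>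
  α + (β - α) * t + (1/N) * ((1 - t) * (∫ s in (0:ℝ)..t, s * (κ s * f s))
    + t * (∫ s in t..(1:ℝ), (1 - s) * (κ s * f s)))

noncomputable def Tcore' (κ : ℝ → ℝ) (N α β : ℝ) (f : ℝ → ℝ) : ℝ → ℝ := fun t =>
  (β - α) + (1/N) * (-(∫ s in (0:ℝ)..t, s * (κ s * f s))
    + (∫ s in t..(1:ℝ), (1 - s) * (κ s * f s)))

lemma prim_hasDerivAt {g : ℝ → ℝ} (hg : Continuous g) (t : ℝ) :
    HasDerivAt (fun t => ∫ s in (0:ℝ)..t, g s) (g t) t :=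
  (hg.integral_hasStrictDerivAt 0 t).hasDerivAt

lemma right_int_eq {g : ℝ → ℝ} (hg : Continuous g) (t : ℝ) :
    (∫ s in t..(1:ℝ), g s) = (∫ s in (0:ℝ)..1, g s) - ∫ s in (0:ℝ)..t, g s :=
  (eq_sub_of_add_eq' (integral_add_adjacent_intervals
    (hg.intervalIntegrable _ _) (hg.intervalIntegrable _ _)))

lemma Tcore_hasDerivAt {κ f : ℝ → ℝ} (hκ : Continuous κ) (hf : Continuous f)
    (N α β t : ℝ) : HasDerivAt (Tcore κ N α β f) (Tcore' κ N α β f t) t := by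
  set h : ℝ → ℝ := fun s => κ s * f s with hh
  have hhc : Continuous h := hκ.mul hf
  have h1c : Continuous (fun s => s * h s) := continuous_id.mul hhc
  have h2c : Continuous (fun s => (1 - s) * h s) :=
    (continuous_const.sub continuous_id).mul hhc
  have hP1 : HasDerivAt (fun t => ∫ s in (0:ℝ)..t, s * h s) (t * h t) t :=
    prim_hasDerivAt h1c t
  have hP2 : HasDerivAt (fun t => ∫ s in (0:ℝ)..t, (1 - s) * h s) ((1 - t) * h t) t :=
    prim_hasDerivAt h2c t
  have hfun : Tcore κ N α β f = fun t => α + (β - α) * t +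
      (1/N) * ((1 - t) * (∫ s in (0:ℝ)..t, s * h s)
        + t * ((∫ s in (0:ℝ)..1, (1 - s) * h s) - ∫ s in (0:ℝ)..t, (1 - s) * h s)) := by
    funext r
    rw [Tcore, right_int_eq h2c r]
  rw [hfun]
  have hd : HasDerivAt (fun t => α + (β - α) * t +
      (1/N) * ((1 - t) * (∫ s in (0:ℝ)..t, s * h s)
        + t * ((∫ s in (0:ℝ)..1, (1 - s) * h s) - ∫ s in (0:ℝ)..t, (1 - s) * h s)))
      ((β - α) + (1/N) * (((-1) * (∫ s in (0:ℝ)..t, s * h s) + (1 - t) * (t * h t))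
        + ((1 : ℝ) * ((∫ s in (0:ℝ)..1, (1 - s) * h s) - ∫ s in (0:ℝ)..t, (1 - s) * h s)
          + t * (0 - (1 - t) * h t)))) t := by
    refine HasDerivAt.add ?_ ?_
    · simpa using ((hasDerivAt_id t).const_mul (β - α)).const_add α
    · refine HasDerivAt.const_mul _ (HasDerivAt.add ?_ ?_)
      · exact ((hasDerivAt_id t).const_sub 1).mul hP1
      · exact (hasDerivAt_id t).mul ((hasDerivAt_const t _).sub hP2)
  convert hd using 1
  rw [Tcore', right_int_eq h2c t]
  ring

lemma Tcore'_hasDerivAt {κ f : ℝ → ℝ} (hκ : Continuous κ) (hf : Continuous f)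
    (N α β t : ℝ) : HasDerivAt (Tcore' κ N α β f) (-(1/N) * (κ t * f t)) t := by
  set h : ℝ → ℝ := fun s => κ s * f s with hh
  have hhc : Continuous h := hκ.mul hf
  have h1c : Continuous (fun s => s * h s) := continuous_id.mul hhc
  have h2c : Continuous (fun s => (1 - s) * h s) :=
    (continuous_const.sub continuous_id).mul hhc
  have hP1 : HasDerivAt (fun t => ∫ s in (0:ℝ)..t, s * h s) (t * h t) t :=
    prim_hasDerivAt h1c t
  have hP2 : HasDerivAt (fun t => ∫ s in (0:ℝ)..t, (1 - s) * h s) ((1 - t) * h t) t :=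
    prim_hasDerivAt h2c t
  have hfun : Tcore' κ N α β f = fun t => (β - α) +
      (1/N) * (-(∫ s in (0:ℝ)..t, s * h s)
        + ((∫ s in (0:ℝ)..1, (1 - s) * h s) - ∫ s in (0:ℝ)..t, (1 - s) * h s)) := by
    funext r
    rw [Tcore', right_int_eq h2c r]
  rw [hfun]
  have hd : HasDerivAt (fun t => (β - α) +
      (1/N) * (-(∫ s in (0:ℝ)..t, s * h s)
        + ((∫ s in (0:ℝ)..1, (1 - s) * h s) - ∫ s in (0:ℝ)..t, (1 - s) * h s)))
      ((1/N) * (-(t * h t) + (0 - (1 - t) * h t))) t := by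
    exact (((hP1.neg).add ((hasDerivAt_const t _).sub hP2)).const_mul _).const_add _
  convert hd using 1
  ring

lemma Tcore_cont {κ f : ℝ → ℝ} (hκ : Continuous κ) (hf : Continuous f)
    (N α β : ℝ) : Continuous (Tcore κ N α β f) :=
  continuous_iff_continuousAt.2 fun t => (Tcore_hasDerivAt hκ hf N α β t).continuousAt

lemma Tcore_zero (κ : ℝ → ℝ) (N α β : ℝ) (f : ℝ → ℝ) : Tcore κ N α β f 0 = α := by
  simp [Tcore]

lemma Tcore_one (κ : ℝ → ℝ) (N α β : ℝ) (f : ℝ → ℝ) : Tcore κ N α β f 1 = β := by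
  simp [Tcore]
open Set MeasureTheory intervalIntegral
open scoped NNReal

section
variable {κ : ℝ → ℝ} {M N : ℝ}

/-- Extension of a continuous map on `Icc 0 1` to all of `ℝ`. -/
noncomputable def extI (w : C(Icc (0:ℝ) 1, ℝ)) : ℝ → ℝ :=
  fun s => w (projIcc 0 1 zero_le_one s)

lemma extI_cont (w : C(Icc (0:ℝ) 1, ℝ)) : Continuous (extI w) :=
  w.continuous.comp continuous_projIcc

lemma extI_eq (w : C(Icc (0:ℝ) 1, ℝ)) {t : ℝ} (ht : t ∈ Icc (0:ℝ) 1) :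
    extI w t = w ⟨t, ht⟩ := by rw [extI, projIcc_of_mem]

lemma exists_sol (hκ : Continuous κ) (hM : ∀ s, |κ s| ≤ M)
    (hN : 4 * M + 1 ≤ N) (α β : ℝ) :
    ∃ u : ℝ → ℝ, Continuous u ∧ u 0 = α ∧ u 1 = β ∧
      (∃ u₁ u₂ : ℝ → ℝ, SturmSol (fun t => κ t / N) u u₁ u₂ (Icc 0 1)) ∧
      (∀ t ∈ Icc (0:ℝ) 1, u t = α + (β - α) * t +
        (1/N) * ((1 - t) * (∫ s in (0:ℝ)..t, s * (κ s * u s))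
          + t * (∫ s in t..(1:ℝ), (1 - s) * (κ s * u s)))) := by
  have hM0 : 0 ≤ M := le_trans (abs_nonneg _) (hM 0)
  have hN0 : (0:ℝ) < N := lt_of_lt_of_le (by linarith) hN
  -- the operator on C(Icc 0 1, ℝ)
  set T : C(Icc (0:ℝ) 1, ℝ) → C(Icc (0:ℝ) 1, ℝ) := fun w =>
    ⟨fun x => Tcore κ N α β (extI w) x,
      (Tcore_cont hκ (extI_cont w) N α β).comp continuous_subtype_val⟩ with hT
  have hcontr : ∀ w₁ w₂ : C(Icc (0:ℝ) 1, ℝ),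
      dist (T w₁) (T w₂) ≤ (1/2) * dist w₁ w₂ := by
    intro w₁ w₂
    set d := dist w₁ w₂ with hd
    have hd0 : 0 ≤ d := dist_nonneg
    rw [ContinuousMap.dist_le (by positivity)]
    rintro ⟨x, hx0, hx1⟩
    have hfd : ∀ s : ℝ, |extI w₁ s - extI w₂ s| ≤ d := by
      intro s
      simpa [extI, Real.dist_eq] using ContinuousMap.dist_apply_le_dist
        (f := w₁) (g := w₂) (projIcc 0 1 zero_le_one s)
    have key : ∀ (φ : ℝ → ℝ) (a b : ℝ), Continuous φ → (∀ s ∈ uIoc a b, |φ s| ≤ 1) →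
        |b - a| ≤ 1 →
        |(∫ s in a..b, φ s * (κ s * extI w₁ s)) - ∫ s in a..b, φ s * (κ s * extI w₂ s)| ≤
          M * d := by
      intro φ a b hφ hφ1 hab
      rw [← intervalIntegral.integral_sub (f := fun s => φ s * (κ s * extI w₁ s))
        (g := fun s => φ s * (κ s * extI w₂ s))
        ((hφ.mul (hκ.mul (extI_cont w₁))).intervalIntegrable _ _)
        ((hφ.mul (hκ.mul (extI_cont w₂))).intervalIntegrable _ _),
        ← Real.norm_eq_abs]
      calc ‖∫ s in a..b, (φ s * (κ s * extI w₁ s) - φ s * (κ s * extI w₂ s))‖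
          ≤ M * d * |b - a| := by
            apply intervalIntegral.norm_integral_le_of_norm_le_const
            intro s hs
            have heq : φ s * (κ s * extI w₁ s) - φ s * (κ s * extI w₂ s)
                = φ s * κ s * (extI w₁ s - extI w₂ s) := by ring
            rw [Real.norm_eq_abs, heq, abs_mul, abs_mul]
            have h1 : |φ s| ≤ 1 := hφ1 s hs
            have h2 : |κ s| ≤ M := hM s
            have h3 : |extI w₁ s - extI w₂ s| ≤ d := hfd s
            calc |φ s| * |κ s| * |extI w₁ s - extI w₂ s|
                ≤ (1 * M) * d := mul_le_mul
                  (mul_le_mul h1 h2 (abs_nonneg _) zero_le_one) h3 (abs_nonneg _)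
                  (by linarith)
              _ = M * d := by ring
        _ ≤ M * d * 1 := mul_le_mul_of_nonneg_left hab (by positivity)
        _ = M * d := by ring
    have e1 : |(∫ s in (0:ℝ)..x, s * (κ s * extI w₁ s)) -
        ∫ s in (0:ℝ)..x, s * (κ s * extI w₂ s)| ≤ M * d := by
      apply key _ 0 x continuous_id
      · intro s hs
        rw [uIoc_of_le hx0] at hs
        simp only [id_eq]
        rw [abs_of_nonneg (le_of_lt hs.1)]
        exact le_trans hs.2 hx1
      · rw [abs_of_nonneg (by linarith)]; linarith
    have e2 : |(∫ s in x..(1:ℝ), (1 - s) * (κ s * extI w₁ s)) -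
        ∫ s in x..(1:ℝ), (1 - s) * (κ s * extI w₂ s)| ≤ M * d := by
      apply key _ x 1 (continuous_const.sub continuous_id)
      · intro s hs
        rw [uIoc_of_le hx1] at hs
        simp only [Pi.sub_apply, id_eq]
        rw [abs_of_nonneg (by linarith [hs.2])]
        linarith [hs.1, hx0]
      · rw [abs_of_nonneg (by linarith)]; linarith
    have expand : (T w₁) ⟨x, hx0, hx1⟩ - (T w₂) ⟨x, hx0, hx1⟩ =
        (1/N) * ((1 - x) * ((∫ s in (0:ℝ)..x, s * (κ s * extI w₁ s)) -
            ∫ s in (0:ℝ)..x, s * (κ s * extI w₂ s))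
          + x * ((∫ s in x..(1:ℝ), (1 - s) * (κ s * extI w₁ s)) -
            ∫ s in x..(1:ℝ), (1 - s) * (κ s * extI w₂ s))) := by
      show Tcore κ N α β (extI w₁) x - Tcore κ N α β (extI w₂) x = _
      rw [Tcore, Tcore]; ring
    rw [Real.dist_eq, expand]
    have hb : |(1 - x) * ((∫ s in (0:ℝ)..x, s * (κ s * extI w₁ s)) -
            ∫ s in (0:ℝ)..x, s * (κ s * extI w₂ s))
          + x * ((∫ s in x..(1:ℝ), (1 - s) * (κ s * extI w₁ s)) -
            ∫ s in x..(1:ℝ), (1 - s) * (κ s * extI w₂ s))| ≤ 2 * (M * d) := by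
      refine le_trans (abs_add_le _ _) ?_
      rw [abs_mul, abs_mul, abs_of_nonneg (by linarith : (0:ℝ) ≤ 1 - x), abs_of_nonneg hx0]
      nlinarith [abs_nonneg ((∫ s in (0:ℝ)..x, s * (κ s * extI w₁ s)) -
            ∫ s in (0:ℝ)..x, s * (κ s * extI w₂ s)),
        abs_nonneg ((∫ s in x..(1:ℝ), (1 - s) * (κ s * extI w₁ s)) -
            ∫ s in x..(1:ℝ), (1 - s) * (κ s * extI w₂ s))]
    rw [abs_mul, abs_of_nonneg (by positivity : (0:ℝ) ≤ 1/N)]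
    calc (1/N) * |_| ≤ (1/N) * (2 * (M * d)) :=
          mul_le_mul_of_nonneg_left hb (by positivity)
      _ ≤ (1/2) * d := by
          rw [div_mul_eq_mul_div, div_le_iff₀ hN0]
          nlinarith
  have hK : ((2⁻¹ : ℝ≥0) : ℝ) = 1/2 := by norm_num
  have hlip : LipschitzWith (2⁻¹ : ℝ≥0) T := by
    apply LipschitzWith.of_dist_le_mul
    intro w₁ w₂
    rw [hK]
    exact hcontr w₁ w₂
  have hC : ContractingWith (2⁻¹ : ℝ≥0) T := ⟨by rw [← NNReal.coe_lt_coe, hK]; norm_num, hlip⟩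
  set w₀ := hC.fixedPoint with hw₀
  have hfix : T w₀ = w₀ := hC.fixedPoint_isFixedPt
  set f : ℝ → ℝ := extI w₀ with hf
  have hfc : Continuous f := extI_cont w₀
  set u : ℝ → ℝ := Tcore κ N α β f with hu
  have huc : Continuous u := Tcore_cont hκ hfc N α β
  have hufix : ∀ t ∈ Icc (0:ℝ) 1, u t = f t := by
    intro t ht
    have h1 : (T w₀) ⟨t, ht⟩ = w₀ ⟨t, ht⟩ := by rw [hfix]
    rw [hf, extI_eq w₀ ht]
    exact h1
  refine ⟨u, huc, Tcore_zero κ N α β f, Tcore_one κ N α β f, ?_, ?_⟩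
  · -- SturmSol
    refine ⟨Tcore' κ N α β f, fun t => -(κ t / N * u t), ?_, ?_, ?_, ?_⟩
    · intro t ht
      exact (Tcore_hasDerivAt hκ hfc N α β t).hasDerivWithinAt
    · intro t ht
      have h1 := Tcore'_hasDerivAt hκ hfc N α β t
      have h2 : -(1/N) * (κ t * f t) = -(κ t / N * u t) := by
        rw [hufix t ht]; ring
      rw [h2] at h1
      exact h1.hasDerivWithinAt
    · exact ((hκ.div_const N).mul huc).neg.continuousOn
    · intro t ht; ring
  · -- fixed point identity with u in the integrand
    intro t ht
    have c1 : (∫ s in (0:ℝ)..t, s * (κ s * f s)) = ∫ s in (0:ℝ)..t, s * (κ s * u s) := by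
      apply intervalIntegral.integral_congr
      intro s hs
      rw [uIcc_of_le ht.1] at hs
      show s * (κ s * f s) = s * (κ s * u s)
      rw [hufix s ⟨hs.1, le_trans hs.2 ht.2⟩]
    have c2 : (∫ s in t..(1:ℝ), (1 - s) * (κ s * f s)) =
        ∫ s in t..(1:ℝ), (1 - s) * (κ s * u s) := by
      apply intervalIntegral.integral_congr
      intro s hs
      rw [uIcc_of_le ht.2] at hs
      show (1 - s) * (κ s * f s) = (1 - s) * (κ s * u s)
      rw [hufix s ⟨le_trans ht.1 hs.1, hs.2⟩]
    conv_lhs => rw [hu, Tcore]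
    rw [c1, c2]
end
open Set MeasureTheory intervalIntegral

lemma sturm_taylor {κ' w w₁ w₂ : ℝ → ℝ} (hS : SturmSol κ' w w₁ w₂ (Icc 0 1))
    {t : ℝ} (ht : t ∈ Icc (0:ℝ) 1) :
    w t = w 0 + w₁ 0 * t + ∫ s in (0:ℝ)..t, (t - s) * w₂ s := by
  obtain ⟨hd1, hd2, hc2, _⟩ := hS
  have hw : ContinuousOn w (Icc 0 1) := fun r hr => (hd1 r hr).continuousWithinAt
  have hw1 : ContinuousOn w₁ (Icc 0 1) := fun r hr => (hd2 r hr).continuousWithinAt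
  have hsub : Icc 0 t ⊆ Icc (0:ℝ) 1 := Icc_subset_Icc le_rfl ht.2
  set φ : ℝ → ℝ := fun r => w r + (t - r) * w₁ r with hφ
  have hφc : ContinuousOn φ (Icc 0 t) :=
    (hw.mono hsub).add (((continuousOn_const.sub continuousOn_id)).mul (hw1.mono hsub))
  have hderiv : ∀ r ∈ Ioo (0:ℝ) t, HasDerivWithinAt φ ((t - r) * w₂ r) (Ioi r) r := by
    intro r hr
    have hrI : r ∈ Icc (0:ℝ) 1 := ⟨le_of_lt hr.1, le_trans (le_of_lt hr.2) ht.2⟩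
    have hnhds : Icc (0:ℝ) 1 ∈ nhds r :=
      Icc_mem_nhds hr.1 (lt_of_lt_of_le hr.2 ht.2)
    have hdw : HasDerivAt w (w₁ r) r := (hd1 r hrI).hasDerivAt hnhds
    have hdw1 : HasDerivAt w₁ (w₂ r) r := (hd2 r hrI).hasDerivAt hnhds
    have : HasDerivAt φ (w₁ r + ((-1) * w₁ r + (t - r) * w₂ r)) r :=
      hdw.add ((((hasDerivAt_id r).const_sub t).mul hdw1))
    have heq : w₁ r + ((-1) * w₁ r + (t - r) * w₂ r) = (t - r) * w₂ r := by ring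
    rw [heq] at this
    exact this.hasDerivWithinAt
  have hint : IntervalIntegrable (fun s => (t - s) * w₂ s) volume 0 t := by
    apply ContinuousOn.intervalIntegrable
    rw [uIcc_of_le ht.1]
    exact (continuousOn_const.sub continuousOn_id).mul (hc2.mono hsub)
  have := intervalIntegral.integral_eq_sub_of_hasDeriv_right_of_le ht.1 hφc hderiv hint
  have hφt : φ t = w t := by rw [hφ]; simp
  have hφ0 : φ 0 = w 0 + t * w₁ 0 := by rw [hφ]; simp
  rw [hφt, hφ0] at this
  linarith [this]

lemma sturm_uniq {κ : ℝ → ℝ} {M N : ℝ} (hM : ∀ s, |κ s| ≤ M)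
    (hN : 4 * M + 1 ≤ N) {w w₁ w₂ v v₁ v₂ : ℝ → ℝ}
    (hw : SturmSol (fun t => κ t / N) w w₁ w₂ (Icc 0 1))
    (hv : SturmSol (fun t => κ t / N) v v₁ v₂ (Icc 0 1))
    (h0 : w 0 = v 0) (h1 : w 1 = v 1) :
    ∀ t ∈ Icc (0:ℝ) 1, w t = v t := by
  have hM0 : 0 ≤ M := le_trans (abs_nonneg _) (hM 0)
  have hN0 : (0:ℝ) < N := lt_of_lt_of_le (by linarith) hN
  set y : ℝ → ℝ := fun t => w t - v t with hy
  have hyc : ContinuousOn y (Icc 0 1) :=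
    ContinuousOn.sub (fun r hr => (hw.1 r hr).continuousWithinAt)
      (fun r hr => (hv.1 r hr).continuousWithinAt)
  -- integrability of w₂, v₂ pieces
  have hw2int : ∀ t ∈ Icc (0:ℝ) 1, IntervalIntegrable (fun s => (t - s) * w₂ s) volume 0 t := by
    intro t ht
    apply ContinuousOn.intervalIntegrable
    rw [uIcc_of_le ht.1]
    exact (continuousOn_const.sub continuousOn_id).mul
      (hw.2.2.1.mono (Icc_subset_Icc le_rfl ht.2))
  have hv2int : ∀ t ∈ Icc (0:ℝ) 1, IntervalIntegrable (fun s => (t - s) * v₂ s) volume 0 t := by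
    intro t ht
    apply ContinuousOn.intervalIntegrable
    rw [uIcc_of_le ht.1]
    exact (continuousOn_const.sub continuousOn_id).mul
      (hv.2.2.1.mono (Icc_subset_Icc le_rfl ht.2))
  set c : ℝ := w₁ 0 - v₁ 0 with hc
  have key : ∀ t ∈ Icc (0:ℝ) 1,
      y t = c * t + ∫ s in (0:ℝ)..t, (t - s) * (-(κ s / N * y s)) := by
    intro t ht
    have hwt := sturm_taylor hw ht
    have hvt := sturm_taylor hv ht
    have hsub : (∫ s in (0:ℝ)..t, (t - s) * w₂ s) - (∫ s in (0:ℝ)..t, (t - s) * v₂ s)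
        = ∫ s in (0:ℝ)..t, ((t - s) * w₂ s - (t - s) * v₂ s) :=
      (intervalIntegral.integral_sub (hw2int t ht) (hv2int t ht)).symm
    have hcongr : (∫ s in (0:ℝ)..t, ((t - s) * w₂ s - (t - s) * v₂ s))
        = ∫ s in (0:ℝ)..t, (t - s) * (-(κ s / N * y s)) := by
      apply intervalIntegral.integral_congr
      intro s hs
      rw [uIcc_of_le ht.1] at hs
      have hsI : s ∈ Icc (0:ℝ) 1 := ⟨hs.1, le_trans hs.2 ht.2⟩
      have hw2 : w₂ s = -(κ s / N * w s) := by linarith [hw.2.2.2 s hsI]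
      have hv2 : v₂ s = -(κ s / N * v s) := by linarith [hv.2.2.2 s hsI]
      show (t - s) * w₂ s - (t - s) * v₂ s = (t - s) * (-(κ s / N * y s))
      rw [hw2, hv2, hy]; ring
    have : y t = c * t + ((∫ s in (0:ℝ)..t, (t - s) * w₂ s)
        - ∫ s in (0:ℝ)..t, (t - s) * v₂ s) := by
      show w t - v t = (w₁ 0 - v₁ 0) * t + ((∫ s in (0:ℝ)..t, (t - s) * w₂ s)
        - ∫ s in (0:ℝ)..t, (t - s) * v₂ s)
      linear_combination hwt - hvt + h0
    rw [this, hsub, hcongr]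
  -- value of c from y 1 = 0
  have hy1 : y 1 = 0 := by rw [hy]; simp [h1]
  have hcval : c = -∫ s in (0:ℝ)..1, (1 - s) * (-(κ s / N * y s)) := by
    have := key 1 (by norm_num)
    rw [hy1] at this
    linarith [this]
  -- max of |y|
  obtain ⟨t₀, ht₀, hmax⟩ := isCompact_Icc.exists_isMaxOn (nonempty_Icc.2 zero_le_one)
    (hyc.abs)
  set d : ℝ := |y t₀| with hdd
  have hd0 : 0 ≤ d := abs_nonneg _
  have hdle : ∀ t ∈ Icc (0:ℝ) 1, |y t| ≤ d := fun t ht => hmax ht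
  -- bound on integrals
  have hintb : ∀ t ∈ Icc (0:ℝ) 1,
      |∫ s in (0:ℝ)..t, (t - s) * (-(κ s / N * y s))| ≤ M * d / N := by
    intro t ht
    rw [← Real.norm_eq_abs]
    calc ‖∫ s in (0:ℝ)..t, (t - s) * (-(κ s / N * y s))‖
        ≤ M * d / N * |t - 0| := by
          apply intervalIntegral.norm_integral_le_of_norm_le_const
          intro s hs
          rw [uIoc_of_le ht.1] at hs
          have hsI : s ∈ Icc (0:ℝ) 1 := ⟨le_of_lt hs.1, le_trans hs.2 ht.2⟩
          have h1 : |t - s| ≤ 1 := by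
            rw [abs_of_nonneg (by linarith [hs.2])]
            linarith [hs.1, ht.2]
          have h2 : |κ s| ≤ M := hM s
          have h3 : |y s| ≤ d := hdle s hsI
          rw [Real.norm_eq_abs, abs_mul, abs_neg, abs_mul, abs_div, abs_of_pos hN0]
          calc |t - s| * (|κ s| / N * |y s|)
              ≤ 1 * (M / N * d) := by gcongr
            _ = M * d / N := by ring
      _ ≤ M * d / N * 1 := by
          apply mul_le_mul_of_nonneg_left _ (by positivity)
          rw [abs_of_nonneg (by linarith [ht.1] : (0:ℝ) ≤ t - 0)]
          linarith [ht.2]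
      _ = M * d / N := by ring
  -- |c| bound
  have hcb : |c| ≤ M * d / N := by
    rw [hcval, abs_neg]
    exact hintb 1 (by norm_num)
  -- final bound
  have hfin : ∀ t ∈ Icc (0:ℝ) 1, |y t| ≤ 2 * (M * d / N) := by
    intro t ht
    rw [key t ht]
    refine le_trans (abs_add_le _ _) ?_
    have h1 : |c * t| ≤ M * d / N := by
      rw [abs_mul]
      calc |c| * |t| ≤ (M * d / N) * 1 := by
            apply mul_le_mul hcb _ (abs_nonneg _) (by positivity)
            rw [abs_of_nonneg ht.1]; exact ht.2
        _ = M * d / N := by ring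
    linarith [hintb t ht]
  have hdz : d ≤ 0 := by
    have := hfin t₀ ht₀
    rw [← hdd] at this
    have h2 : d * N ≤ 2 * (M * d) := by
      have h3 := mul_le_mul_of_nonneg_right this (le_of_lt hN0)
      have h4 : (2 * (M * d / N)) * N = 2 * (M * d) := by field_simp
      linarith
    nlinarith [mul_nonneg hM0 hd0, mul_le_mul_of_nonneg_left hN hd0]
  intro t ht
  have h3 : |y t| ≤ 0 := le_trans (hdle t ht) hdz
  have h4 : y t = 0 := abs_eq_zero.1 (le_antisymm h3 (abs_nonneg _))
  have : w t - v t = 0 := h4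
  linarith
open Set MeasureTheory intervalIntegral

lemma green_split {h : ℝ → ℝ} (hh : Continuous h) {t : ℝ} (ht : t ∈ Icc (0:ℝ) 1) :
    (∫ s in (0:ℝ)..1, min (s * (1 - t)) (t * (1 - s)) * h s)
      = (1 - t) * (∫ s in (0:ℝ)..t, s * h s) + t * ∫ s in t..(1:ℝ), (1 - s) * h s := by
  have hker : Continuous (fun s => min (s * (1 - t)) (t * (1 - s)) * h s) :=
    ((continuous_id.mul continuous_const).min
      (continuous_const.mul (continuous_const.sub continuous_id))).mul hh
  have hadd := intervalIntegral.integral_add_adjacent_intervals (μ := volume) (a := (0:ℝ)) (b := t)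
    (c := 1) (f := fun s => min (s * (1 - t)) (t * (1 - s)) * h s)
    (hker.intervalIntegrable _ _) (hker.intervalIntegrable _ _)
  rw [← hadd]
  congr 1
  · rw [← intervalIntegral.integral_const_mul]
    apply intervalIntegral.integral_congr
    intro s hs
    rw [uIcc_of_le ht.1] at hs
    have hm : min (s * (1 - t)) (t * (1 - s)) = s * (1 - t) :=
      min_eq_left (by nlinarith [hs.1, hs.2, ht.2])
    show min (s * (1 - t)) (t * (1 - s)) * h s = (1 - t) * (s * h s)
    rw [hm]; ring
  · rw [← intervalIntegral.integral_const_mul]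
    apply intervalIntegral.integral_congr
    intro s hs
    rw [uIcc_of_le ht.2] at hs
    have hm : min (s * (1 - t)) (t * (1 - s)) = t * (1 - s) :=
      min_eq_right (by nlinarith [hs.1, hs.2, ht.1])
    show min (s * (1 - t)) (t * (1 - s)) * h s = t * ((1 - s) * h s)
    rw [hm]; ring

lemma bvp_sum_bound {κ S : ℝ → ℝ} {M N : ℝ} (hκ : Continuous κ)
    (hM : ∀ s, |κ s| ≤ M) (hN : 4 * M + 1 ≤ N) (hS : Continuous S)
    (hid : ∀ t ∈ Icc (0:ℝ) 1, S t = 1 + (1/N) * ((1 - t) *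
        (∫ s in (0:ℝ)..t, s * (κ s * S s))
      + t * ∫ s in t..(1:ℝ), (1 - s) * (κ s * S s))) :
    ∀ t ∈ Icc (0:ℝ) 1, |S t - 1| ≤ 4 * M / N := by
  have hM0 : 0 ≤ M := le_trans (abs_nonneg _) (hM 0)
  have hN0 : (0:ℝ) < N := lt_of_lt_of_le (by linarith) hN
  obtain ⟨t₀, ht₀, hmax⟩ := isCompact_Icc.exists_isMaxOn (nonempty_Icc.2 zero_le_one)
    (((hS.sub continuous_const).abs).continuousOn : ContinuousOn (fun t => |S t - 1|) (Icc 0 1))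
  set e : ℝ := |S t₀ - 1| with he
  have he0 : 0 ≤ e := abs_nonneg _
  have hle : ∀ t ∈ Icc (0:ℝ) 1, |S t - 1| ≤ e := fun t ht => hmax ht
  have hSb : ∀ s ∈ Icc (0:ℝ) 1, |S s| ≤ e + 1 := by
    intro s hs
    calc |S s| = |(S s - 1) + 1| := by ring_nf
      _ ≤ |S s - 1| + 1 := by
          refine le_trans (abs_add_le _ _) ?_
          simp
      _ ≤ e + 1 := by linarith [hle s hs]
  -- bound the two integrals
  have key : ∀ (φ : ℝ → ℝ) (a b : ℝ), Continuous φ → (∀ s ∈ uIoc a b, |φ s| ≤ 1) →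
      (uIoc a b ⊆ Icc 0 1) → |b - a| ≤ 1 →
      |∫ s in a..b, φ s * (κ s * S s)| ≤ M * (e + 1) := by
    intro φ a b hφ hφ1 hsub hab
    rw [← Real.norm_eq_abs]
    calc ‖∫ s in a..b, φ s * (κ s * S s)‖
        ≤ M * (e + 1) * |b - a| := by
          apply intervalIntegral.norm_integral_le_of_norm_le_const
          intro s hs
          rw [Real.norm_eq_abs, abs_mul, abs_mul]
          calc |φ s| * (|κ s| * |S s|)
              ≤ 1 * (M * (e + 1)) := by
                apply mul_le_mul (hφ1 s hs) _ (by positivity) zero_le_one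
                exact mul_le_mul (hM s) (hSb s (hsub hs)) (abs_nonneg _) hM0
            _ = M * (e + 1) := by ring
      _ ≤ M * (e + 1) * 1 := mul_le_mul_of_nonneg_left hab (by positivity)
      _ = M * (e + 1) := by ring
  have hbd : ∀ t ∈ Icc (0:ℝ) 1, |S t - 1| ≤ 2 * (M * (e + 1)) / N := by
    intro t ht
    have e1 : |∫ s in (0:ℝ)..t, s * (κ s * S s)| ≤ M * (e + 1) := by
      apply key _ 0 t continuous_id
      · intro s hs
        rw [uIoc_of_le ht.1] at hs
        simp only [id_eq]
        rw [abs_of_nonneg (le_of_lt hs.1)]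
        exact le_trans hs.2 ht.2
      · rw [uIoc_of_le ht.1]
        exact fun s hs => ⟨le_of_lt hs.1, le_trans hs.2 ht.2⟩
      · rw [abs_of_nonneg (by linarith [ht.1])]; linarith [ht.2]
    have e2 : |∫ s in t..(1:ℝ), (1 - s) * (κ s * S s)| ≤ M * (e + 1) := by
      apply key _ t 1 (continuous_const.sub continuous_id)
      · intro s hs
        rw [uIoc_of_le ht.2] at hs
        simp only [Pi.sub_apply, id_eq]
        rw [abs_of_nonneg (by linarith [hs.2])]
        linarith [hs.1, ht.1]
      · rw [uIoc_of_le ht.2]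
        exact fun s hs => ⟨le_trans ht.1 (le_of_lt hs.1), hs.2⟩
      · rw [abs_of_nonneg (by linarith [ht.2])]; linarith [ht.1]
    have hrw : S t - 1 = (1/N) * ((1 - t) * (∫ s in (0:ℝ)..t, s * (κ s * S s))
        + t * ∫ s in t..(1:ℝ), (1 - s) * (κ s * S s)) := by
      linear_combination hid t ht
    rw [hrw, abs_mul, abs_of_nonneg (by positivity : (0:ℝ) ≤ 1/N)]
    have habs : |(1 - t) * (∫ s in (0:ℝ)..t, s * (κ s * S s))
        + t * ∫ s in t..(1:ℝ), (1 - s) * (κ s * S s)| ≤ 2 * (M * (e + 1)) := by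
      refine le_trans (abs_add_le _ _) ?_
      rw [abs_mul, abs_mul, abs_of_nonneg (by linarith [ht.2] : (0:ℝ) ≤ 1 - t),
        abs_of_nonneg ht.1]
      nlinarith [abs_nonneg (∫ s in (0:ℝ)..t, s * (κ s * S s)),
        abs_nonneg (∫ s in t..(1:ℝ), (1 - s) * (κ s * S s)), ht.1, ht.2,
        mul_nonneg hM0 (by linarith : (0:ℝ) ≤ e + 1)]
    calc (1/N) * |(1 - t) * (∫ s in (0:ℝ)..t, s * (κ s * S s))
        + t * ∫ s in t..(1:ℝ), (1 - s) * (κ s * S s)|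
        ≤ (1/N) * (2 * (M * (e + 1))) := mul_le_mul_of_nonneg_left habs (by positivity)
      _ = 2 * (M * (e + 1)) / N := by ring
  -- solve for e
  have hee : e ≤ 4 * M / N := by
    have h1 := hbd t₀ ht₀
    rw [← he] at h1
    have h2 : e * N ≤ 2 * (M * (e + 1)) := by
      have h3 := mul_le_mul_of_nonneg_right h1 (le_of_lt hN0)
      have h4 : (2 * (M * (e + 1)) / N) * N = 2 * (M * (e + 1)) := by field_simp
      linarith
    rw [le_div_iff₀ hN0]
    nlinarith [mul_le_mul_of_nonneg_left hN he0]
  intro t ht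
  exact le_trans (hle t ht) hee

lemma sturmSol_congr {κ₁ κ₂ u u₁ u₂ : ℝ → ℝ} {s : Set ℝ} (h : ∀ t ∈ s, κ₁ t = κ₂ t)
    (hS : SturmSol κ₁ u u₁ u₂ s) : SturmSol κ₂ u u₁ u₂ s :=
  ⟨hS.1, hS.2.1, hS.2.2.1, fun t ht => by rw [← h t ht]; exact hS.2.2.2 t ht⟩

/-- For large `N`, the boundary value problems for `w'' + (κ/N)w = 0` with data `(0,1)` and
`(1,0)` have unique solutions `a_N`, `b_N`; moreover `a_N + b_N → 1` uniformly, and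
`N·(1 − a_N(t) − b_N(t)) → −∫₀¹ g(t,s)κ(s) ds` with `g` the Green function of `[0,1]`. -/
theorem distortion_asymptotics
    (κ : ℝ → ℝ) (hκ : ContinuousOn κ (Icc 0 1)) :
    ∃ N₀ : ℝ, 1 ≤ N₀ ∧ ∃ A B : ℝ → ℝ → ℝ,
      (∀ N ≥ N₀,
        ((∃ a₁ a₂ : ℝ → ℝ, SturmSol (fun t => κ t / N) (A N) a₁ a₂ (Icc 0 1)) ∧
          A N 0 = 0 ∧ A N 1 = 1 ∧
          (∀ w w₁ w₂ : ℝ → ℝ, SturmSol (fun t => κ t / N) w w₁ w₂ (Icc 0 1) →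
            w 0 = 0 → w 1 = 1 → ∀ t ∈ Icc (0:ℝ) 1, w t = A N t)) ∧
        ((∃ b₁ b₂ : ℝ → ℝ, SturmSol (fun t => κ t / N) (B N) b₁ b₂ (Icc 0 1)) ∧
          B N 0 = 1 ∧ B N 1 = 0 ∧
          (∀ w w₁ w₂ : ℝ → ℝ, SturmSol (fun t => κ t / N) w w₁ w₂ (Icc 0 1) →
            w 0 = 1 → w 1 = 0 → ∀ t ∈ Icc (0:ℝ) 1, w t = B N t))) ∧
      TendstoUniformlyOn (fun N t => A N t + B N t) (fun _ => 1)
        Filter.atTop (Icc 0 1) ∧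
      (∀ t ∈ Icc (0:ℝ) 1,
        Filter.Tendsto (fun N => N * (1 - A N t - B N t)) Filter.atTop
          (nhds (-∫ s in (0:ℝ)..1, min (s * (1 - t)) (t * (1 - s)) * κ s))) := by
  -- continuous extension of κ and its bound
  set κ' : ℝ → ℝ := fun s => κ (projIcc 0 1 zero_le_one s) with hκ'def
  have hκ'c : Continuous κ' := hκ.restrict.comp continuous_projIcc
  have hκ'eq : ∀ t ∈ Icc (0:ℝ) 1, κ' t = κ t := by
    intro t ht
    show κ ↑(projIcc 0 1 zero_le_one t) = κ t
    rw [projIcc_of_mem zero_le_one ht]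
  obtain ⟨C, hC⟩ := isCompact_Icc.exists_bound_of_continuousOn hκ
  set M : ℝ := max C 0 with hMdef
  have hM0 : (0:ℝ) ≤ M := le_max_right _ _
  have hM : ∀ s, |κ' s| ≤ M := by
    intro s
    have hmem := (projIcc 0 1 zero_le_one s).2
    calc |κ' s| = ‖κ ↑(projIcc 0 1 zero_le_one s)‖ := (Real.norm_eq_abs _).symm
      _ ≤ C := hC _ hmem
      _ ≤ M := le_max_left _ _
  refine ⟨4 * M + 1, by linarith, ?_⟩
  -- the solutions, by choice
  have hex : ∀ N α β : ℝ, ∃ u : ℝ → ℝ, 4 * M + 1 ≤ N →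
      Continuous u ∧ u 0 = α ∧ u 1 = β ∧
      (∃ u₁ u₂ : ℝ → ℝ, SturmSol (fun t => κ' t / N) u u₁ u₂ (Icc 0 1)) ∧
      (∀ t ∈ Icc (0:ℝ) 1, u t = α + (β - α) * t + (1/N) * ((1 - t) *
        (∫ s in (0:ℝ)..t, s * (κ' s * u s))
        + t * ∫ s in t..(1:ℝ), (1 - s) * (κ' s * u s))) := by
    intro N α β
    by_cases h : 4 * M + 1 ≤ N
    · obtain ⟨u, h1, h2, h3, h4, h5⟩ := exists_sol hκ'c hM h α β
      exact ⟨u, fun _ => ⟨h1, h2, h3, h4, h5⟩⟩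
    · exact ⟨0, fun h' => absurd h' h⟩
  choose u hu using hex
  -- the sum identity and the sum bound
  have hSid : ∀ N, 4 * M + 1 ≤ N → ∀ t ∈ Icc (0:ℝ) 1,
      u N 0 1 t + u N 1 0 t = 1 + (1/N) * ((1 - t) *
        (∫ s in (0:ℝ)..t, s * (κ' s * (u N 0 1 s + u N 1 0 s)))
      + t * ∫ s in t..(1:ℝ), (1 - s) * (κ' s * (u N 0 1 s + u N 1 0 s))) := by
    intro N hN t ht
    obtain ⟨hac, _, _, _, haid⟩ := hu N 0 1 hN
    obtain ⟨hbc, _, _, _, hbid⟩ := hu N 1 0 hN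
    have e1 : (∫ s in (0:ℝ)..t, s * (κ' s * (u N 0 1 s + u N 1 0 s)))
        = (∫ s in (0:ℝ)..t, s * (κ' s * u N 0 1 s))
          + ∫ s in (0:ℝ)..t, s * (κ' s * u N 1 0 s) := by
      rw [← intervalIntegral.integral_add
        ((show Continuous fun s : ℝ => s * (κ' s * u N 0 1 s) from
          continuous_id.mul (hκ'c.mul hac)).intervalIntegrable _ _)
        ((show Continuous fun s : ℝ => s * (κ' s * u N 1 0 s) from
          continuous_id.mul (hκ'c.mul hbc)).intervalIntegrable _ _)]
      apply intervalIntegral.integral_congr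
      intro s _
      show s * (κ' s * (u N 0 1 s + u N 1 0 s))
        = s * (κ' s * u N 0 1 s) + s * (κ' s * u N 1 0 s)
      ring
    have e2 : (∫ s in t..(1:ℝ), (1 - s) * (κ' s * (u N 0 1 s + u N 1 0 s)))
        = (∫ s in t..(1:ℝ), (1 - s) * (κ' s * u N 0 1 s))
          + ∫ s in t..(1:ℝ), (1 - s) * (κ' s * u N 1 0 s) := by
      rw [← intervalIntegral.integral_add
        ((show Continuous fun s : ℝ => (1 - s) * (κ' s * u N 0 1 s) from
          (continuous_const.sub continuous_id).mul (hκ'c.mul hac)).intervalIntegrable _ _)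
        ((show Continuous fun s : ℝ => (1 - s) * (κ' s * u N 1 0 s) from
          (continuous_const.sub continuous_id).mul (hκ'c.mul hbc)).intervalIntegrable _ _)]
      apply intervalIntegral.integral_congr
      intro s _
      show (1 - s) * (κ' s * (u N 0 1 s + u N 1 0 s))
        = (1 - s) * (κ' s * u N 0 1 s) + (1 - s) * (κ' s * u N 1 0 s)
      ring
    linear_combination haid t ht + hbid t ht - ((1 - t)/N) * e1 - (t/N) * e2
  have hSb : ∀ N, 4 * M + 1 ≤ N → ∀ t ∈ Icc (0:ℝ) 1,
      |u N 0 1 t + u N 1 0 t - 1| ≤ 4 * M / N := fun N hN =>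
    bvp_sum_bound hκ'c hM hN ((hu N 0 1 hN).1.add (hu N 1 0 hN).1) (hSid N hN)
  refine ⟨fun N => u N 0 1, fun N => u N 1 0, ?_, ?_, ?_⟩
  · -- BVP solutions and uniqueness
    intro N hN
    obtain ⟨hac, ha0, ha1, ⟨a₁, a₂, haS⟩, haid⟩ := hu N 0 1 hN
    obtain ⟨hbc, hb0, hb1, ⟨b₁, b₂, hbS⟩, hbid⟩ := hu N 1 0 hN
    have hcong : ∀ t ∈ Icc (0:ℝ) 1, κ' t / N = κ t / N := fun t ht => by rw [hκ'eq t ht]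
    have hcong' : ∀ t ∈ Icc (0:ℝ) 1, κ t / N = κ' t / N := fun t ht => by rw [hκ'eq t ht]
    refine ⟨⟨⟨a₁, a₂, sturmSol_congr hcong haS⟩, ha0, ha1, ?_⟩,
      ⟨⟨b₁, b₂, sturmSol_congr hcong hbS⟩, hb0, hb1, ?_⟩⟩
    · intro w w₁ w₂ hwS hw0 hw1 t ht
      exact sturm_uniq hM hN (sturmSol_congr hcong' hwS) haS
        (hw0.trans ha0.symm) (hw1.trans ha1.symm) t ht
    · intro w w₁ w₂ hwS hw0 hw1 t ht
      exact sturm_uniq hM hN (sturmSol_congr hcong' hwS) hbS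
        (hw0.trans hb0.symm) (hw1.trans hb1.symm) t ht
  · -- uniform convergence
    rw [Metric.tendstoUniformlyOn_iff]
    intro ε hε
    filter_upwards [Filter.eventually_ge_atTop (max (4*M+1) ((4*M+1)/ε))] with N hN' t ht
    have hN1 : 4*M+1 ≤ N := le_trans (le_max_left _ _) hN'
    have hN0 : (0:ℝ) < N := lt_of_lt_of_le (by linarith) hN1
    have hb := hSb N hN1 t ht
    have h4M : 4*M < ε * N := by
      have h5 := le_trans (le_max_right _ _) hN'
      rw [div_le_iff₀ hε] at h5
      nlinarith
    rw [Real.dist_eq, abs_sub_comm]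
    calc |u N 0 1 t + u N 1 0 t - 1| ≤ 4*M/N := hb
      _ < ε := by rw [div_lt_iff₀ hN0]; nlinarith
  · -- pointwise convergence of N (1 - A - B)
    intro t ht
    set L : ℝ := -∫ s in (0:ℝ)..1, min (s * (1 - t)) (t * (1 - s)) * κ s with hL
    have hLκ' : (∫ s in (0:ℝ)..1, min (s * (1 - t)) (t * (1 - s)) * κ s)
        = ∫ s in (0:ℝ)..1, min (s * (1 - t)) (t * (1 - s)) * κ' s := by
      apply intervalIntegral.integral_congr
      intro s hs
      rw [uIcc_of_le zero_le_one] at hs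
      show min (s * (1 - t)) (t * (1 - s)) * κ s = min (s * (1 - t)) (t * (1 - s)) * κ' s
      rw [hκ'eq s hs]
    have hsplit := green_split hκ'c ht
    rw [tendsto_iff_dist_tendsto_zero]
    refine squeeze_zero' (g := fun N => 4*M*M/N)
      (Filter.Eventually.of_forall fun _ => dist_nonneg) ?_
      (tendsto_const_nhds.div_atTop Filter.tendsto_id)
    filter_upwards [Filter.eventually_ge_atTop (4*M+1)] with N hN
    have hN0 : (0:ℝ) < N := lt_of_lt_of_le (by linarith) hN
    have hSc : Continuous (fun s => u N 0 1 s + u N 1 0 s) :=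
      (hu N 0 1 hN).1.add (hu N 1 0 hN).1
    set I1 : ℝ := ∫ s in (0:ℝ)..t, s * (κ' s * (u N 0 1 s + u N 1 0 s)) with hI1
    set I2 : ℝ := ∫ s in t..(1:ℝ), (1 - s) * (κ' s * (u N 0 1 s + u N 1 0 s)) with hI2
    set J1 : ℝ := ∫ s in (0:ℝ)..t, s * κ' s with hJ1
    set J2 : ℝ := ∫ s in t..(1:ℝ), (1 - s) * κ' s with hJ2
    -- N (1 - a - b) = -((1-t) I1 + t I2)
    have hid := hSid N hN t ht
    have hX : N * (1 - u N 0 1 t - u N 1 0 t) = -((1 - t) * I1 + t * I2) := by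
      have h1 : N * (u N 0 1 t + u N 1 0 t)
          = N * (1 + (1/N) * ((1 - t) * I1 + t * I2)) := by rw [hid]
      have h3 : N * (1/N) = 1 := by field_simp
      linear_combination -h1 - ((1 - t) * I1 + t * I2) * h3
    -- integral difference bounds
    have hdiff : ∀ (φ : ℝ → ℝ) (a b : ℝ), Continuous φ → (∀ s ∈ uIoc a b, |φ s| ≤ 1) →
        (uIoc a b ⊆ Icc 0 1) → |b - a| ≤ 1 →
        |(∫ s in a..b, φ s * κ' s) - ∫ s in a..b, φ s * (κ' s * (u N 0 1 s + u N 1 0 s))|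
          ≤ 4*M*M/N := by
      intro φ a b hφ hφ1 hsub hab
      rw [← intervalIntegral.integral_sub (f := fun s => φ s * κ' s)
        (g := fun s => φ s * (κ' s * (u N 0 1 s + u N 1 0 s))) ((hφ.mul hκ'c).intervalIntegrable _ _)
        ((hφ.mul (hκ'c.mul hSc)).intervalIntegrable _ _), ← Real.norm_eq_abs]
      have hC0 : (0:ℝ) ≤ M * (4*M/N) :=
        mul_nonneg hM0 (div_nonneg (by positivity) hN0.le)
      calc ‖∫ s in a..b, (φ s * κ' s - φ s * (κ' s * (u N 0 1 s + u N 1 0 s)))‖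
          ≤ M * (4*M/N) * |b - a| := by
            apply intervalIntegral.norm_integral_le_of_norm_le_const
            intro s hs
            have hsI : s ∈ Icc (0:ℝ) 1 := hsub hs
            have heq : φ s * κ' s - φ s * (κ' s * (u N 0 1 s + u N 1 0 s))
                = φ s * κ' s * (1 - (u N 0 1 s + u N 1 0 s)) := by ring
            rw [Real.norm_eq_abs, heq, abs_mul, abs_mul]
            have h2 : |1 - (u N 0 1 s + u N 1 0 s)| ≤ 4*M/N := by
              rw [abs_sub_comm]
              exact hSb N hN s hsI
            calc |φ s| * |κ' s| * |1 - (u N 0 1 s + u N 1 0 s)|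
                ≤ 1 * M * (4*M/N) := by
                  apply mul_le_mul (mul_le_mul (hφ1 s hs) (hM s) (abs_nonneg _) zero_le_one)
                    h2 (abs_nonneg _) (by linarith)
              _ = M * (4*M/N) := by ring
        _ ≤ M * (4*M/N) * 1 := mul_le_mul_of_nonneg_left hab hC0
        _ = 4*M*M/N := by ring
    have hd1 : |J1 - I1| ≤ 4*M*M/N := by
      rw [hJ1, hI1]
      apply hdiff _ 0 t continuous_id
      · intro s hs
        rw [uIoc_of_le ht.1] at hs
        simp only [id_eq]
        rw [abs_of_nonneg (le_of_lt hs.1)]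
        exact le_trans hs.2 ht.2
      · rw [uIoc_of_le ht.1]
        exact fun s hs => ⟨le_of_lt hs.1, le_trans hs.2 ht.2⟩
      · rw [abs_of_nonneg (by linarith [ht.1])]; linarith [ht.2]
    have hd2 : |J2 - I2| ≤ 4*M*M/N := by
      rw [hJ2, hI2]
      apply hdiff _ t 1 (continuous_const.sub continuous_id)
      · intro s hs
        rw [uIoc_of_le ht.2] at hs
        simp only [Pi.sub_apply, id_eq]
        rw [abs_of_nonneg (by linarith [hs.2])]
        linarith [hs.1, ht.1]
      · rw [uIoc_of_le ht.2]
        exact fun s hs => ⟨le_trans ht.1 (le_of_lt hs.1), hs.2⟩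
      · rw [abs_of_nonneg (by linarith [ht.2])]; linarith [ht.1]
    have hLsplit : L = -((1 - t) * J1 + t * J2) := by
      rw [hL, hLκ', hsplit]
    rw [Real.dist_eq, hX, hLsplit]
    have heq2 : -((1 - t) * I1 + t * I2) - -((1 - t) * J1 + t * J2)
        = (1 - t) * (J1 - I1) + t * (J2 - I2) := by ring
    rw [heq2]
    have hC0' : (0:ℝ) ≤ 4*M*M/N := div_nonneg (by positivity) hN0.le
    calc |(1 - t) * (J1 - I1) + t * (J2 - I2)|
        ≤ |(1 - t) * (J1 - I1)| + |t * (J2 - I2)| := abs_add_le _ _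
      _ ≤ (1 - t) * (4*M*M/N) + t * (4*M*M/N) := by
          rw [abs_mul, abs_mul, abs_of_nonneg (by linarith [ht.2] : (0:ℝ) ≤ 1 - t),
            abs_of_nonneg ht.1]
          exact add_le_add (mul_le_mul_of_nonneg_left hd1 (by linarith [ht.2]))
            (mul_le_mul_of_nonneg_left hd2 ht.1)
      _ = 4*M*M/N := by ring
end

section
/- Let α > 0 and β > 0, and define u : [0,β) → ℝ by u(t) = √(β − t)·sin(α·log(β/(β − t))). Then u is twice continuously differentiable on (0,β), u(0) = 0, u satisfies u''(t) + ((α² + 1/4)/(β − t)²)·u(t) = 0 for all t ∈ (0,β), and the smallest zero of u in (0,β) is t = β·(1 − e^{−π/α}). (The explicit comparison solution used in the generalized Bonnet–Myers/Schneider theorem: a solution of u'' + κu = 0 for κ(t) = (α² + 1/4)·(β − t)^{−2} vanishing at 0 has its next zero at β(1 − e^{−π/α}).) -/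
open Set

/-- The explicit comparison solution used in the generalized Bonnet–Myers/Schneider theorem:
`u(t) = √(β − t) · sin(α · log(β/(β − t)))`. -/
noncomputable def schneiderSol (α β : ℝ) : ℝ → ℝ :=
  fun t => Real.sqrt (β - t) * Real.sin (α * Real.log (β / (β - t)))

noncomputable def schneiderSol' (α β : ℝ) : ℝ → ℝ :=
  fun t => (α * Real.cos (α * Real.log (β / (β - t)))
    - Real.sin (α * Real.log (β / (β - t))) / 2) / Real.sqrt (β - t)

lemma log_hasDerivAt (β t : ℝ) (hβ : 0 < β) (ht : 0 < β - t) :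
    HasDerivAt (fun t => Real.log (β / (β - t))) (1 / (β - t)) t := by
  have h1 : HasDerivAt (fun x : ℝ => β - x) (-1) t := (hasDerivAt_id t).const_sub β
  have hdiv := (hasDerivAt_const t β).div h1 ht.ne'
  have hlog := hdiv.log (div_ne_zero hβ.ne' ht.ne')
  refine hlog.congr_deriv ?_
  symm
  simp only [Pi.div_apply]
  field_simp
  ring

lemma sol_hasDerivAt (α β t : ℝ) (hβ : 0 < β) (ht : 0 < β - t) :
    HasDerivAt (schneiderSol α β) (schneiderSol' α β t) t := by
  have h1 : HasDerivAt (fun x : ℝ => β - x) (-1) t := (hasDerivAt_id t).const_sub β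
  have hsqne : Real.sqrt (β - t) ≠ 0 := (Real.sqrt_pos.mpr ht).ne'
  have hss : Real.sqrt (β - t) * Real.sqrt (β - t) = β - t := Real.mul_self_sqrt ht.le
  have hsqrt := h1.sqrt ht.ne'
  have hsin := ((log_hasDerivAt β t hβ ht).const_mul α).sin
  have hu := hsqrt.mul hsin
  refine hu.congr_deriv ?_
  symm
  unfold schneiderSol'
  field_simp
  ring_nf
  linear_combination (-2*α*Real.cos (α*Real.log (β*(β-t)⁻¹))) * hss

lemma sol'_hasDerivAt (α β t : ℝ) (hβ : 0 < β) (ht : 0 < β - t) :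
    HasDerivAt (schneiderSol' α β)
      (-((α ^ 2 + 1 / 4) * Real.sin (α * Real.log (β / (β - t)))
        / ((β - t) * Real.sqrt (β - t)))) t := by
  have h1 : HasDerivAt (fun x : ℝ => β - x) (-1) t := (hasDerivAt_id t).const_sub β
  have hsqne : Real.sqrt (β - t) ≠ 0 := (Real.sqrt_pos.mpr ht).ne'
  have hss : Real.sqrt (β - t) * Real.sqrt (β - t) = β - t := Real.mul_self_sqrt ht.le
  have hsqrt := h1.sqrt ht.ne'
  have hL := (log_hasDerivAt β t hβ ht).const_mul α
  have hnum := (hL.cos.const_mul α).sub (hL.sin.div_const 2)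
  have hq := hnum.div hsqrt hsqne
  refine hq.congr_deriv ?_
  symm
  simp only [Pi.sub_apply]
  field_simp
  ring_nf
  linear_combination (8*α*Real.cos (α*Real.log (β*(β-t)⁻¹)) - 4*Real.sin (α*Real.log (β*(β-t)⁻¹))) * hss


/-- `u(t) = √(β − t)·sin(α·log(β/(β − t)))` is twice continuously differentiable on `(0,β)`,
vanishes at `0`, solves `u'' + ((α² + 1/4)/(β − t)²)·u = 0` on `(0,β)`, and its smallest zero
in `(0,β)` is `β·(1 − e^{−π/α})`. -/
theorem schneider_comparison_solution (α β : ℝ) (hα : 0 < α) (hβ : 0 < β) :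
    ContDiffOn ℝ 2 (schneiderSol α β) (Ioo 0 β) ∧
    schneiderSol α β 0 = 0 ∧
    (∀ t ∈ Ioo 0 β,
      deriv (deriv (schneiderSol α β)) t +
        ((α ^ 2 + 1 / 4) / (β - t) ^ 2) * schneiderSol α β t = 0) ∧
    IsLeast {t | t ∈ Ioo 0 β ∧ schneiderSol α β t = 0}
      (β * (1 - Real.exp (-(Real.pi / α)))) := by
  refine ⟨?_, ?_, ?_, ?_⟩
  · -- smoothness
    intro t ht
    have hs : 0 < β - t := sub_pos.mpr ht.2
    have hsub : ContDiffAt ℝ 2 (fun x : ℝ => β - x) t :=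
      (contDiff_const.sub contDiff_id).contDiffAt
    have hsqrt : ContDiffAt ℝ 2 (fun x : ℝ => Real.sqrt (β - x)) t :=
      (Real.contDiffAt_sqrt hs.ne').comp t hsub
    have hdivv : ContDiffAt ℝ 2 (fun x : ℝ => β / (β - x)) t :=
      contDiffAt_const.div hsub hs.ne'
    have hlog : ContDiffAt ℝ 2 (fun x : ℝ => Real.log (β / (β - x))) t :=
      by exact (Real.contDiffAt_log (x := β / (β - t)) |>.mpr (div_ne_zero hβ.ne' hs.ne')).comp t hdivv
    have hsin : ContDiffAt ℝ 2 (fun x : ℝ => Real.sin (α * Real.log (β / (β - x)))) t :=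
      (Real.contDiff_sin.contDiffAt).comp t (hlog.const_smul α)
    exact (hsqrt.mul hsin).contDiffWithinAt
  · -- value at 0
    simp [schneiderSol, div_self hβ.ne']
  · -- ODE
    intro t ht
    have hs : 0 < β - t := sub_pos.mpr ht.2
    have hsqne : Real.sqrt (β - t) ≠ 0 := (Real.sqrt_pos.mpr hs).ne'
    have hss : Real.sqrt (β - t) * Real.sqrt (β - t) = β - t := Real.mul_self_sqrt hs.le
    have heq : deriv (schneiderSol α β) =ᶠ[nhds t] schneiderSol' α β := by
      filter_upwards [isOpen_Ioo.mem_nhds ht] with x hx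
      exact (sol_hasDerivAt α β x hβ (sub_pos.mpr hx.2)).deriv
    rw [heq.deriv_eq, (sol'_hasDerivAt α β t hβ hs).deriv]
    unfold schneiderSol
    field_simp
    linear_combination ((α^2*4+1) * Real.sin (α * Real.log (β / (β - t)))) * hss
  · -- least zero
    set t₀ := β * (1 - Real.exp (-(Real.pi / α))) with ht₀
    have hexp : 0 < Real.exp (-(Real.pi / α)) := Real.exp_pos _
    have hexp1 : Real.exp (-(Real.pi / α)) < 1 := by
      apply Real.exp_lt_one_iff.mpr
      simpa using div_pos Real.pi_pos hα
    have h0 : 0 < t₀ := mul_pos hβ (by linarith)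
    have hβ0 : t₀ < β := by nlinarith
    have hst : β - t₀ = β * Real.exp (-(Real.pi / α)) := by ring
    have hq : β / (β - t₀) = Real.exp (Real.pi / α) := by
      rw [hst, Real.exp_neg]
      field_simp
    constructor
    · refine ⟨⟨h0, hβ0⟩, ?_⟩
      unfold schneiderSol
      rw [hq, Real.log_exp]
      rw [mul_div_cancel₀ _ hα.ne']
      simp
    · rintro t ⟨⟨ht0, htβ⟩, hu⟩
      by_contra h
      push_neg at h
      have hs : 0 < β - t := sub_pos.mpr htβ
      have hL0 : 0 < Real.log (β / (β - t)) := by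
        apply Real.log_pos
        rw [lt_div_iff₀ hs]
        linarith
      have hLπ : α * Real.log (β / (β - t)) < Real.pi := by
        have h1 : β / (β - t) < Real.exp (Real.pi / α) := by
          rw [← hq]
          apply div_lt_div_of_pos_left hβ (by linarith) (by linarith)
        have h2 : Real.log (β / (β - t)) < Real.pi / α := by
          calc Real.log (β / (β - t)) < Real.log (Real.exp (Real.pi / α)) :=
                Real.log_lt_log (div_pos hβ hs) h1
            _ = Real.pi / α := Real.log_exp _
        calc α * Real.log (β / (β - t)) < α * (Real.pi / α) := by
              exact (mul_lt_mul_iff_right₀ hα).mpr h2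
          _ = Real.pi := by field_simp
      have hsinpos : 0 < Real.sin (α * Real.log (β / (β - t))) :=
        Real.sin_pos_of_pos_of_lt_pi (mul_pos hα hL0) hLπ
      have : schneiderSol α β t > 0 :=
        mul_pos (Real.sqrt_pos.mpr hs) hsinpos
      linarith [hu ▸ this]
end
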